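/- arXiv:1810.06223 — 2 statements merged into one kernel-verified Lean document; each statement's English description precedes it below -/
import Mathlib

section
/- For any cubic polynomial w on [a,b] and the linear function ξ with ξ(a) = -1 and ξ(b) = 1, the mean value of w'·ξ over [a,b] equals (w'(b) - w'(a))/6. -/
open intervalIntegral Polynomial

theorem Polynomial.integral_eval_eq_simpson {p : ℝ[X]} (hp : p.natDegree ≤ 3) (a b : ℝ) :
    ∫ x in a..b, p.eval x = (b - a) / 6 * (p.eval a + 4 * p.eval ((a + b) / 2) + p.eval b) := by
  simp only [eval_eq_sum_range' (Nat.lt_succ_of_le hp)]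
  rw [integral_finsetSum (f := fun i x => p.coeff i * x ^ i)
    fun i _ => (continuous_const.mul (continuous_pow i)).intervalIntegrable a b]
  simp only [integral_const_mul, integral_pow, Finset.sum_range_succ, Finset.sum_range_zero]
  ring

theorem stmt_7_general (a b : ℝ) (w : Polynomial ℝ) (hw : w.natDegree ≤ 3) :
    (1 / (b - a)) * ∫ x in a..b, w.derivative.eval x * ((2 * x - a - b) / (b - a)) =
      (w.derivative.eval b - w.derivative.eval a) / 6 := by
  rcases eq_or_ne a b with rfl | hab
  · simp
  have hba : b - a ≠ 0 := sub_ne_zero.mpr hab.symm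
  set f : ℝ[X] := derivative w * (C 2 * X - C (a + b))
  have hf : f.natDegree ≤ 3 := by
    have hw' : (derivative w).natDegree ≤ 2 := (natDegree_derivative_le w).trans (by omega)
    have hlin : (C 2 * X - C (a + b)).natDegree ≤ 1 := by compute_degree
    exact natDegree_mul_le.trans (by omega)
  -- The Simpson nodes of `f` carry the values `-(b - a) w'(a)`, `0` and `(b - a) w'(b)`.
  calc (1 / (b - a)) * ∫ x in a..b, w.derivative.eval x * ((2 * x - a - b) / (b - a))
      = 1 / (b - a) ^ 2 * ∫ x in a..b, f.eval x := by
        rw [← integral_const_mul, ← integral_const_mul]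
        congr 1; ext x
        simp only [f, eval_mul, eval_sub, eval_C, eval_X]
        field_simp
        ring
    _ = (w.derivative.eval b - w.derivative.eval a) / 6 := by
        rw [f.integral_eval_eq_simpson hf]
        simp only [f, eval_mul, eval_sub, eval_C, eval_X]
        field_simp
        ring

theorem stmt_7 (a b : ℝ) (hab : a < b) (w : Polynomial ℝ) (hw : w.natDegree ≤ 3) :
    (1 / (b - a)) * ∫ x in a..b, w.derivative.eval x * ((2 * x - a - b) / (b - a)) =
      (w.derivative.eval b - w.derivative.eval a) / 6 :=
  stmt_7_general a b w hw
end

section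
/- Let K be a convex quadrilateral with vertices V1, V2, V3, V4 in counterclockwise order, and let A = (1/4)(V3 - V4 - V1 + V2 | V3 + V4 - V1 - V2) (a 2×2 matrix with these two column vectors), d = (1/4)(V3 - V4 + V1 - V2), and s = (s1, s2)^T = A^{-1} d. Then |s1| + |s2| < 1. -/
/-!
Write `c₁, …, c₄` for the corner cross products `cross2 (V2 - V1) (V3 - V2), …`, i.e. twice the
areas of the triangles cut off at `V2, V3, V4, V1`. Both diagonals split `K`, so
`c₁ + c₃ = c₂ + c₄ = 2 |K|`. By Cramer's rule `det A = (c₁ + c₃) / 8`, `s₁ = (c₂ - c₁) / (c₁ + c₃)`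
and `s₂ = (c₂ - c₃) / (c₁ + c₃)`, and `|c₂ - c₁| + |c₂ - c₃| < c₁ + c₃` holds as soon as all `cᵢ`
are positive.
-/

/-- Cross product of two planar vectors. -/
def cross2 (u v : ℝ × ℝ) : ℝ := u.1 * v.2 - u.2 * v.1

theorem Matrix.inv_mulVec_fin_two {K : Type*} [Field K] (A : Matrix (Fin 2) (Fin 2) K)
    (v : Fin 2 → K) :
    A⁻¹.mulVec v = A.det⁻¹ • ![A 1 1 * v 0 - A 0 1 * v 1, A 0 0 * v 1 - A 1 0 * v 0] := by
  rw [Matrix.inv_def, Ring.inverse_eq_inv', Matrix.smul_mulVec, Matrix.adjugate_fin_two]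
  congr 1
  ext i
  fin_cases i <;> simp [Matrix.mulVec, dotProduct, Fin.sum_univ_two] <;> ring

theorem cross2_add_cross2_opposite_corners (V1 V2 V3 V4 : ℝ × ℝ) :
    cross2 (V2 - V1) (V3 - V2) + cross2 (V4 - V3) (V1 - V4) =
      cross2 (V3 - V2) (V4 - V3) + cross2 (V1 - V4) (V2 - V1) := by
  simp only [cross2, Prod.fst_sub, Prod.snd_sub]
  ring

theorem abs_sub_add_abs_sub_lt_add {a b c : ℝ} (ha : 0 < a) (hb : 0 < b) (hc : 0 < c)
    (hbac : b < a + c) : |b - a| + |b - c| < a + c := by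
  rcases abs_cases (b - a) with ⟨h₁, _⟩ | ⟨h₁, _⟩ <;>
    rcases abs_cases (b - c) with ⟨h₂, _⟩ | ⟨h₂, _⟩ <;> linarith

theorem stmt_9 (V1 V2 V3 V4 : ℝ × ℝ)
    (hc1 : 0 < cross2 (V2 - V1) (V3 - V2))
    (hc2 : 0 < cross2 (V3 - V2) (V4 - V3))
    (hc3 : 0 < cross2 (V4 - V3) (V1 - V4))
    (hc4 : 0 < cross2 (V1 - V4) (V2 - V1))
    (A : Matrix (Fin 2) (Fin 2) ℝ)
    (hA : A = !![(V3.1 - V4.1 - V1.1 + V2.1) / 4, (V3.1 + V4.1 - V1.1 - V2.1) / 4;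
                 (V3.2 - V4.2 - V1.2 + V2.2) / 4, (V3.2 + V4.2 - V1.2 - V2.2) / 4])
    (d : Fin 2 → ℝ)
    (hd : d = ![(V3.1 - V4.1 + V1.1 - V2.1) / 4, (V3.2 - V4.2 + V1.2 - V2.2) / 4])
    (s : Fin 2 → ℝ) (hs : s = A⁻¹.mulVec d) :
    |s 0| + |s 1| < 1 := by
  set c1 := cross2 (V2 - V1) (V3 - V2)
  set c2 := cross2 (V3 - V2) (V4 - V3)
  set c3 := cross2 (V4 - V3) (V1 - V4)
  have hc2_lt : c2 < c1 + c3 := by linarith [cross2_add_cross2_opposite_corners V1 V2 V3 V4]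
  have hpos : 0 < c1 + c3 := by positivity
  have hdet : A.det = (c1 + c3) / 8 := by
    simp only [hA, Matrix.det_fin_two_of, c1, c3, cross2, Prod.fst_sub, Prod.snd_sub]
    ring
  have hs' : s = ![(c2 - c1) / (c1 + c3), (c2 - c3) / (c1 + c3)] := by
    rw [hs, Matrix.inv_mulVec_fin_two, hdet]
    ext i
    fin_cases i <;>
      simp only [hA, hd, c1, c2, c3, cross2, Matrix.of_apply, Matrix.cons_val', Matrix.cons_val_zero,
        Matrix.cons_val_one, Matrix.cons_val_fin_one, Prod.fst_sub, Prod.snd_sub, Pi.smul_apply,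
        smul_eq_mul, Fin.zero_eta, Fin.mk_one] <;>
      field_simp <;> ring
  simp only [hs', Matrix.cons_val_zero, Matrix.cons_val_one]
  rw [abs_div, abs_div, abs_of_pos hpos, ← add_div, div_lt_one hpos]
  exact abs_sub_add_abs_sub_lt_add hc1 hc2 hc3 hc2_lt
end
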